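/- For all integers p ≥ q ≥ 1 and every m ∈ ℤ, G_m^{[p/q]} = x_q·G_{m−1}^{[p/q]} + (1+βx_q)·G_m^{[p/q+1]}. -/

import Mathlib

/- Common setup: `R = ℤ[β][[x₀,x₁,x₂,…]]` with `β = Polynomial.X`; only the
variables `x i` for `i ≥ 1` are used in the statements. -/

attribute [local instance] Classical.propDecidable

noncomputable section

abbrev A : Type := Polynomial ℤ
abbrev R : Type := MvPowerSeries ℕ A

/-- the element β -/
def bR : R := (MvPowerSeries.C (σ := ℕ) (R := A)) Polynomial.X

/-- the variable `x i` -/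
def Xv (i : ℕ) : R := MvPowerSeries.X i

/-- total degree of a monomial -/
def degSum (d : ℕ →₀ ℕ) : ℕ := d.sum fun _ n => n

/-- the ring automorphism `s i` exchanging `x i` and `x (i+1)` -/
def sOp (i : ℕ) (f : R) : R := fun d => f (Finsupp.equivMapDomain (Equiv.swap i (i+1)) d)

/-- the divided difference operator `π i`, characterized by
`(x i - x (i+1)) * π i f = (1 + β x (i+1)) f - (1 + β x i) (s i f)`. -/
def ddiff (i : ℕ) (f : R) : R :=
  Classical.epsilon fun gq : R =>
    (Xv i - Xv (i+1)) * gq = (1 + bR * Xv (i+1)) * f - (1 + bR * Xv i) * sOp i f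

/-- complete homogeneous symmetric function of degree `j` in the variables `x_q, …, x_p` -/
def hsym (q p : ℕ) (j : ℤ) : R := fun d =>
  if (∀ k ∈ d.support, q ≤ k ∧ k ≤ p) ∧ (degSum d : ℤ) = j then 1 else 0

/-- `∏_{i=q}^{p} (1 + β x_i)` -/
def prodOneAdd (q p : ℕ) : R := ∏ i ∈ Finset.Icc q p, (1 + bR * Xv i)

/-- `G_m^{[p/q]} = Σ_{s≥0} (−β)^s (∏_{i=q}^p (1+βx_i)) h_{m+s}(x_q,…,x_p)`,
defined coefficientwise (only the terms with `m + s ≤ deg d` can contribute to the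
coefficient at a monomial `d`). -/
def Gsk (p q : ℕ) (m : ℤ) : R := fun d =>
  ∑ s ∈ Finset.range (((degSum d : ℤ) - m).toNat + 1),
    (-Polynomial.X : A) ^ s * MvPowerSeries.coeff (R := A) d (prodOneAdd q p * hsym q p (m + s))

/-- `G_m^{[p]} = G_m^{[p/1]}` -/
def Gk (p : ℕ) (m : ℤ) : R := Gsk p 1 m

/-- the geometric series `Σ_{s≥0} (−β x_i)^s = 1/(1+βx_i)` -/
def geom (i : ℕ) : R := fun d =>
  if d.support ⊆ {i} then (-Polynomial.X : A) ^ (d i) else 0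

/-- substitution of `x₁ = 0` -/
def setX1Zero (f : R) : R := fun d => if d 1 = 0 then f d else 0

/-- generalized binomial coefficient `C(c,s) = c(c−1)⋯(c−s+1)/s!` for `c : ℤ` -/
def intChoose (c : ℤ) (s : ℕ) : ℤ :=
  if 0 ≤ c then (c.toNat.choose s : ℤ) else (-1) ^ s * (((s : ℤ) - 1 - c).toNat.choose s : ℤ)

/-- `Σ_{s≥0} C(c,s) β^s G_{m+s}^{[p/q]}`, defined coefficientwise. -/
def JT (p q : ℕ) (c m : ℤ) : R := fun d =>
  ∑ s ∈ Finset.range (((degSum d : ℤ) - m).toNat + 1),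
    ((intChoose c s : ℤ) : A) * Polynomial.X ^ s * MvPowerSeries.coeff (R := A) d (Gsk p q (m + s))

/-- the Jacobi–Trudi type determinant `G̃_{λ/μ,f/g}` (rows and columns indexed by
`Fin r`, with `i : Fin r` representing the 1-based index `i+1`). -/
def GtildeSkew (r : ℕ) (lam mu f g : Fin r → ℕ) : R :=
  Matrix.det (Matrix.of fun i j : Fin r =>
    JT (f i) (g j) ((i : ℤ) - (j : ℤ))
      ((lam i : ℤ) - (mu j : ℤ) + (j : ℤ) - (i : ℤ)))

/-- the Jacobi–Trudi type determinant `G̃_{λ,f}` -/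
def Gtilde (r : ℕ) (lam f : Fin r → ℕ) : R :=
  GtildeSkew r lam (fun _ => 0) f (fun _ => 1)

/-- flagged skew set-valued tableaux of shape `λ/μ` with flagging `f/g`:
a tableau assigns to the box in row `i` (1-based index `i+1`), column `j`
(with `μᵢ < j ≤ λᵢ`) a nonempty subset of `{gᵢ,…,fᵢ}`, weakly increasing
along rows and strictly increasing along columns; boxes outside the shape
carry `∅`. -/
def IsFSVT (r : ℕ) (lam mu f g : Fin r → ℕ) (T : Fin r × ℕ → Finset ℕ) : Prop :=
  (∀ (i : Fin r) (j : ℕ), ¬ (mu i < j ∧ j ≤ lam i) → T (i, j) = ∅) ∧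
  (∀ (i : Fin r) (j : ℕ), mu i < j → j ≤ lam i → (T (i, j)).Nonempty) ∧
  (∀ (i : Fin r) (j k : ℕ), k ∈ T (i, j) → g i ≤ k ∧ k ≤ f i) ∧
  (∀ (i : Fin r) (j : ℕ), mu i < j → j + 1 ≤ lam i →
     ∀ a ∈ T (i, j), ∀ b ∈ T (i, j + 1), a ≤ b) ∧
  (∀ (i : Fin r) (h : (i : ℕ) + 1 < r) (j : ℕ),
     mu i < j → j ≤ lam i → mu ⟨(i : ℕ) + 1, h⟩ < j → j ≤ lam ⟨(i : ℕ) + 1, h⟩ →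
     ∀ a ∈ T (i, j), ∀ b ∈ T (⟨(i : ℕ) + 1, h⟩, j), a < b)

/-- the total number `|T|` of entries of a tableau -/
def entriesCount (r : ℕ) (lam mu : Fin r → ℕ) (T : Fin r × ℕ → Finset ℕ) : ℕ :=
  ∑ i : Fin r, ∑ j ∈ Finset.Ioc (mu i) (lam i), (T (i, j)).card

/-- `|λ/μ|` -/
def shapeSize (r : ℕ) (lam mu : Fin r → ℕ) : ℕ := ∑ i : Fin r, (lam i - mu i)

/-- the weight `β^{|T|−|λ/μ|} ∏_{k∈T} x_k` of a tableau -/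
def wt (r : ℕ) (lam mu : Fin r → ℕ) (T : Fin r × ℕ → Finset ℕ) : R :=
  bR ^ (entriesCount r lam mu T - shapeSize r lam mu) *
    ∏ i : Fin r, ∏ j ∈ Finset.Ioc (mu i) (lam i), ∏ k ∈ T (i, j), Xv k

/-- the flagged skew Grothendieck polynomial `G_{λ/μ,f/g}` as the (finite) sum of
the weights of all flagged skew set-valued tableaux -/
def GF (r : ℕ) (lam mu f g : Fin r → ℕ) : R :=
  ∑ᶠ (T : Fin r × ℕ → Finset ℕ) (_ : IsFSVT r lam mu f g T), wt r lam mu T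

/- permutations: `w ∈ S_n` is encoded as a permutation of `ℕ` fixing `0` and
everything `> n`. -/

/-- `w` belongs to `S_n` -/
def isSn (n : ℕ) (w : Equiv.Perm ℕ) : Prop := ∀ k, k = 0 ∨ n < k → w k = k

/-- Coxeter length = number of inversions -/
def len (n : ℕ) (w : Equiv.Perm ℕ) : ℕ :=
  (((Finset.Icc 1 n) ×ˢ (Finset.Icc 1 n)).filter fun pr : ℕ × ℕ =>
    pr.1 < pr.2 ∧ w pr.2 < w pr.1).card

/-- the rank function `r_w(p,q) = #{i ≤ p : w(i) ≤ q}` -/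
def rankf (w : Equiv.Perm ℕ) (p q : ℕ) : ℕ :=
  ((Finset.Icc 1 p).filter fun i => w i ≤ q).card

/-- the diagram `D(w)` -/
def inD (n : ℕ) (w : Equiv.Perm ℕ) (p q : ℕ) : Prop :=
  1 ≤ p ∧ p ≤ n ∧ 1 ≤ q ∧ q ≤ n ∧ q < w p ∧ p < w.symm q

/-- the essential set `Ess(w)` -/
def inEss (n : ℕ) (w : Equiv.Perm ℕ) (p q : ℕ) : Prop :=
  inD n w p q ∧ ¬ inD n w (p+1) q ∧ ¬ inD n w p (q+1)

/-- `w ∈ S_n` is vexillary: it avoids the pattern 2143 -/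
def Vexillary (n : ℕ) (w : Equiv.Perm ℕ) : Prop :=
  ¬ ∃ a b c d : ℕ, 1 ≤ a ∧ a < b ∧ b < c ∧ c < d ∧ d ≤ n ∧
      w b < w a ∧ w a < w d ∧ w d < w c


/-! Write `P_q = ∏_{i=q}^p (1 + β x_i)` and `h_j^{(q)} = h_j(x_q, …, x_p)`. Then
`G_m^{[p/q]} = ∑_s (-β)^s P_q h_{m+s}^{(q)}` converges coefficientwise, and the recurrence holds
term by term because `P_q = (1 + β x_q) P_{q+1}` and `h_j^{(q)} = x_q h_{j-1}^{(q)} + h_j^{(q+1)}`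
(split monomials by whether they contain `x_q`). -/

open MvPowerSeries Finsupp

lemma degSum_eq_degree (d : ℕ →₀ ℕ) : degSum d = d.degree := rfl

lemma coeff_Xv_mul_add_single (i : ℕ) (f : R) (e : ℕ →₀ ℕ) :
    coeff (e + single i 1) (Xv i * f) = coeff e f := by
  rw [add_comm, Xv, X, coeff_add_monomial_mul, one_mul]

lemma coeff_Xv_mul_of_eq_zero (i : ℕ) (f : R) {d : ℕ →₀ ℕ} (hd : d i = 0) :
    coeff d (Xv i * f) = 0 := by
  rw [Xv, X, coeff_monomial_mul, if_neg]
  simp [single_le_iff, hd]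

lemma coeff_neg_bR_pow_mul (s : ℕ) (f : R) (d : ℕ →₀ ℕ) :
    coeff d ((-bR) ^ s * f) = (-Polynomial.X) ^ s * coeff d f := by
  rw [bR, ← map_neg, ← map_pow, coeff_C_mul]

lemma coeff_hsym (q p : ℕ) (j : ℤ) (d : ℕ →₀ ℕ) :
    coeff d (hsym q p j) =
      if (∀ k, d k ≠ 0 → q ≤ k ∧ k ≤ p) ∧ (d.degree : ℤ) = j then 1 else 0 := by
  simp only [← mem_support_iff, ← degSum_eq_degree]
  rfl

lemma coeff_mul_hsym_of_lt (f : R) {q p : ℕ} {j : ℤ} {d : ℕ →₀ ℕ} (hd : (d.degree : ℤ) < j) :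
    coeff d (f * hsym q p j) = 0 := by
  rw [coeff_mul]
  refine Finset.sum_eq_zero fun x hx => ?_
  have : x.2.degree ≤ d.degree := by
    rw [← Finset.HasAntidiagonal.mem_antidiagonal.1 hx, map_add]
    omega
  rw [coeff_hsym, if_neg (by omega), mul_zero]

lemma hsym_succ_left {q p : ℕ} (hqp : q ≤ p) (j : ℤ) :
    hsym q p j = Xv q * hsym q p (j - 1) + hsym (q + 1) p j := by
  refine MvPowerSeries.ext fun d => ?_
  rw [map_add]
  obtain hd | hd := Nat.eq_zero_or_pos (d q)
  · rw [coeff_Xv_mul_of_eq_zero _ _ hd, zero_add, coeff_hsym, coeff_hsym]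
    refine if_congr (and_congr_left' (forall_congr' fun k => imp_congr_right fun hk => ?_)) rfl rfl
    have : k ≠ q := by rintro rfl; exact hk hd
    omega
  · obtain ⟨e, rfl⟩ : ∃ e, d = e + single q 1 :=
      ⟨d - single q 1, (tsub_add_cancel_of_le (single_le_iff.2 hd)).symm⟩
    have hzero : coeff (e + single q 1) (hsym (q + 1) p j) = 0 := by
      rw [coeff_hsym, if_neg fun h => by simpa using h.1 q (by simp)]
    rw [coeff_Xv_mul_add_single, hzero, add_zero, coeff_hsym, coeff_hsym]
    refine if_congr ?_ rfl rfl
    simp only [coe_add, Pi.add_apply, single_apply, ne_eq, Nat.add_eq_zero_iff,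
      ite_eq_right_iff, one_ne_zero, imp_false, not_and, Decidable.not_not, map_add,
      degree_single, Nat.cast_add, Nat.cast_one]
    refine and_congr ⟨fun h k hk => h k (by omega), fun h k hk => ?_⟩ (by omega)
    by_cases hqk : q = k
    · exact hqk ▸ ⟨le_rfl, hqp⟩
    · exact h k (by simpa [hqk] using hk)

lemma prodOneAdd_succ_left {q p : ℕ} (hqp : q ≤ p) :
    prodOneAdd q p = (1 + bR * Xv q) * prodOneAdd (q + 1) p := by
  rw [prodOneAdd, prodOneAdd, ← Finset.insert_Icc_add_one_left_eq_Icc hqp,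
    Finset.prod_insert (by simp)]

lemma prodOneAdd_mul_hsym_succ_left {q p : ℕ} (hqp : q ≤ p) (j : ℤ) :
    prodOneAdd q p * hsym q p j =
      Xv q * (prodOneAdd q p * hsym q p (j - 1)) +
        (1 + bR * Xv q) * (prodOneAdd (q + 1) p * hsym (q + 1) p j) := by
  rw [hsym_succ_left hqp, prodOneAdd_succ_left hqp]
  ring

-- With `ℤ[β]` discrete, summability in the product topology means every coefficient is an
-- eventually-zero sum, which is exactly how `Gsk` is defined.
local instance : TopologicalSpace A := ⊥

local instance : DiscreteTopology A := ⟨rfl⟩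

open WithPiTopology

lemma hasSum_Gsk (p q : ℕ) (m : ℤ) :
    HasSum (fun s : ℕ => (-bR) ^ s * (prodOneAdd q p * hsym q p (m + s))) (Gsk p q m) := by
  refine hasSum_iff_hasSum_coeff.2 fun d => ?_
  simp only [coeff_neg_bR_pow_mul]
  refine hasSum_sum_of_ne_finset_zero
    (s := Finset.range (((degSum d : ℤ) - m).toNat + 1)) fun s hs => ?_
  rw [Finset.mem_range] at hs
  rw [coeff_mul_hsym_of_lt _ (by rw [← degSum_eq_degree]; omega), mul_zero]

theorem stmt11_general (p q : ℕ) (hqp : q ≤ p) (m : ℤ) :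
    Gsk p q m = Xv q * Gsk p q (m - 1) + (1 + bR * Xv q) * Gsk p (q+1) m := by
  refine (hasSum_Gsk p q m).unique <| (((hasSum_Gsk p q (m - 1)).mul_left (Xv q)).add
    ((hasSum_Gsk p (q + 1) m).mul_left (1 + bR * Xv q))).congr_fun fun s => ?_
  rw [prodOneAdd_mul_hsym_succ_left hqp, sub_add_eq_add_sub]
  ring

theorem stmt11 (p q : ℕ) (hq : 1 ≤ q) (hqp : q ≤ p) (m : ℤ) :
    Gsk p q m = Xv q * Gsk p q (m - 1) + (1 + bR * Xv q) * Gsk p (q+1) m :=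
  stmt11_general p q hqp m

end
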